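/- Let 0<s<1 and 0<r<1 with r > 2s, and define u:ℝ→ℝ by u(x) = -1 for x<-1, u(x) = -|x|^r for -1≤x<0, u(x) = x^r for 0≤x≤1, and u(x) = 1 for x>1. Let H(x) := ∫_{ℝ∖(-1/2,1/2)} (u(x+y) - u(x)) |y|^{-1-2s} dy for x ≥ 0. Then the map t ↦ H(t^{1/r}) is Lipschitz continuous on [0, 2^{-r}]. -/

import Mathlib

open MeasureTheory Set

/-!
For `t ∈ [0, 2^(-r)]` the point `x = t^(1/r)` lies in `[0, 1]`, so `u x = t` and
`H (t^(1/r)) = G (t^(1/r)) - C t`, where `G x = ∫_S u (x + y) |y|^(-1-2s) dy`,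
`C = ∫_S |y|^(-1-2s) dy` and `S = {|y| ≥ 1/2}`. As `1/r ≥ 1`, `t ↦ t^(1/r)` is Lipschitz on
bounded intervals, so it remains to see that `G` is Lipschitz, although `u` is not (it behaves
like `|x|^r` at `0`). This holds because `u` is monotone and constant outside `[-1, 1]`: for
`x' ≤ x` the increment `u (x + y) - u (x' + y)` is nonnegative and vanishes for `y` outside a
bounded interval, where the kernel is at most `2^(1+2s)`, and its integral over an interval
`[α, β]` equals `∫_{β+x'}^{β+x} u - ∫_{α+x'}^{α+x} u ≤ (x - x') (sup u - inf u)`.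
-/

section Profile

variable {u : ℝ → ℝ} {r : ℝ}

lemma eq_neg_min_rpow_of_nonpos (hr : 0 < r)
    (hu1 : ∀ x : ℝ, x < -1 → u x = -1)
    (hu2 : ∀ x : ℝ, -1 ≤ x → x < 0 → u x = -(|x| ^ r))
    (hu3 : ∀ x : ℝ, 0 ≤ x → x ≤ 1 → u x = x ^ r) {x : ℝ} (hx : x ≤ 0) :
    u x = -min (|x| ^ r) 1 := by
  rcases lt_or_ge x (-1) with hx1 | hx1
  · have : 1 ≤ |x| ^ r := Real.one_le_rpow (by rw [abs_of_neg (by linarith)]; linarith) hr.le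
    rw [hu1 x hx1, min_eq_right this]
  rcases hx.lt_or_eq with hx0 | rfl
  · have : |x| ^ r ≤ 1 :=
      Real.rpow_le_one (abs_nonneg x) (by rw [abs_of_neg hx0]; linarith) hr.le
    rw [hu2 x hx1 hx0, min_eq_left this]
  · simp [hu3 0 le_rfl zero_le_one, Real.zero_rpow hr.ne']

lemma eq_min_rpow_of_nonneg (hr : 0 ≤ r)
    (hu3 : ∀ x : ℝ, 0 ≤ x → x ≤ 1 → u x = x ^ r)
    (hu4 : ∀ x : ℝ, 1 < x → u x = 1) {x : ℝ} (hx : 0 ≤ x) :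
    u x = min (x ^ r) 1 := by
  rcases le_or_gt x 1 with hx1 | hx1
  · rw [hu3 x hx hx1, min_eq_left (Real.rpow_le_one hx hx1 hr)]
  · rw [hu4 x hx1, min_eq_right (Real.one_le_rpow hx1.le hr)]

lemma monotone_of_eq_min_rpow (hr : 0 ≤ r)
    (hneg : ∀ x ≤ 0, u x = -min (|x| ^ r) 1) (hpos : ∀ x, 0 ≤ x → u x = min (x ^ r) 1) :
    Monotone u := by
  refine MonotoneOn.Iic_union_Ici (a := 0) ?_ ?_
  · intro x hx y hy hxy
    have habs : |y| ≤ |x| := by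
      rw [abs_of_nonpos hy, abs_of_nonpos hx]; linarith
    rw [hneg x hx, hneg y hy, neg_le_neg_iff]
    exact min_le_min_right 1 (Real.rpow_le_rpow (abs_nonneg y) habs hr)
  · intro x hx y hy hxy
    rw [hpos x hx, hpos y hy]
    exact min_le_min_right 1 (Real.rpow_le_rpow hx hxy hr)

lemma eq_neg_one_of_le_neg_one (hr : 0 ≤ r)
    (hneg : ∀ x ≤ 0, u x = -min (|x| ^ r) 1) {x : ℝ} (hx : x ≤ -1) : u x = -1 := by
  have : 1 ≤ |x| := by rw [abs_of_neg (by linarith)]; linarith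
  rw [hneg x (by linarith), min_eq_right (Real.one_le_rpow this hr)]

lemma eq_one_of_one_le (hr : 0 ≤ r)
    (hpos : ∀ x, 0 ≤ x → u x = min (x ^ r) 1) {x : ℝ} (hx : 1 ≤ x) : u x = 1 := by
  rw [hpos x (by linarith), min_eq_right (Real.one_le_rpow hx hr)]

lemma apply_rpow_one_div_eq_self (hr : 0 < r)
    (hu3 : ∀ x : ℝ, 0 ≤ x → x ≤ 1 → u x = x ^ r) {t : ℝ} (ht : t ∈ Icc 0 1) :
    u (t ^ (1 / r)) = t := by
  rw [hu3 _ (Real.rpow_nonneg ht.1 _) (Real.rpow_le_one ht.1 ht.2 (by positivity)), one_div,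
    Real.rpow_inv_rpow ht.1 hr.ne']

end Profile

theorem Monotone.intervalIntegral_comp_add_sub_le {f : ℝ → ℝ} (hf : Monotone f)
    (α β : ℝ) {x x' : ℝ} (hx : x' ≤ x) :
    ∫ y in α..β, (f (x + y) - f (x' + y)) ≤ (x - x') * (f (x + β) - f (x' + α)) := by
  have hint : ∀ a b : ℝ, IntervalIntegrable f volume a b := fun _ _ => hf.intervalIntegrable
  have hshift : ∀ c : ℝ, Monotone fun y => f (c + y) := fun c _ _ h => hf (by linarith)
  rw [intervalIntegral.integral_sub (hshift x).intervalIntegrable (hshift x').intervalIntegrable,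
    intervalIntegral.integral_comp_add_left f x, intervalIntegral.integral_comp_add_left f x',
    intervalIntegral.integral_interval_sub_interval_comm' (hint _ _) (hint _ _) (hint _ _)]
  have hupper : ∫ z in (x' + β)..(x + β), f z ≤ (x - x') * f (x + β) := by
    simpa using intervalIntegral.integral_mono_on (by linarith : x' + β ≤ x + β) (hint _ _)
      intervalIntegrable_const fun z hz => hf hz.2
  have hlower : (x - x') * f (x' + α) ≤ ∫ z in (x' + α)..(x + α), f z := by
    simpa using intervalIntegral.integral_mono_on (by linarith : x' + α ≤ x + α)
      intervalIntegrable_const (hint _ _) fun z hz => hf hz.1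
  linarith

theorem Monotone.mem_Icc_of_eq_of_eq {f : ℝ → ℝ} {a b m M : ℝ} (hf : Monotone f)
    (hfa : ∀ z ≤ a, f z = m) (hfb : ∀ z, b ≤ z → f z = M) (z : ℝ) : f z ∈ Icc m M := by
  constructor
  · rcases le_total z a with h | h
    exacts [(hfa z h).ge, hfa a le_rfl ▸ hf h]
  · rcases le_total b z with h | h
    exacts [(hfb z h).le, hfb b le_rfl ▸ hf h]

theorem MeasureTheory.IntegrableOn.bdd_comp_add_mul {f k : ℝ → ℝ} {S : Set ℝ} {M : ℝ}
    (hk : IntegrableOn k S) (hf : Measurable f) (hfM : ∀ z, |f z| ≤ M) (x : ℝ) :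
    IntegrableOn (fun y => f (x + y) * k y) S :=
  hk.bdd_mul (hf.comp (measurable_const_add x)).aestronglyMeasurable
    (ae_of_all _ fun _ => (Real.norm_eq_abs _).trans_le (hfM _))

theorem sub_comp_add_eq_zero_of_notMem_Ioc {f : ℝ → ℝ} {a b m M x x' y : ℝ}
    (hfa : ∀ z ≤ a, f z = m) (hfb : ∀ z, b ≤ z → f z = M) (hx : x' ≤ x)
    (hy : y ∉ Ioc (a - x) (b - x')) : f (x + y) - f (x' + y) = 0 := by
  rcases le_or_gt y (a - x) with h | h
  · rw [hfa _ (by linarith), hfa _ (by linarith), sub_self]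
  · have h' : b - x' < y := by by_contra! h'; exact hy ⟨h, h'⟩
    rw [hfb _ (by linarith), hfb _ (by linarith), sub_self]

section Translation

variable {f k : ℝ → ℝ} {S : Set ℝ} {a b m M K : ℝ}

theorem Monotone.setIntegral_comp_add_mul_sub_le (hf : Monotone f) (hab : a ≤ b)
    (hfa : ∀ z ≤ a, f z = m) (hfb : ∀ z, b ≤ z → f z = M) (hS : MeasurableSet S)
    (hk : IntegrableOn k S) (hk0 : ∀ y ∈ S, 0 ≤ k y) (hkK : ∀ y ∈ S, k y ≤ K) (hK : 0 ≤ K)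
    {x x' : ℝ} (hx : x' ≤ x) :
    0 ≤ (∫ y in S, f (x + y) * k y) - ∫ y in S, f (x' + y) * k y ∧
      (∫ y in S, f (x + y) * k y) - ∫ y in S, f (x' + y) * k y ≤ K * (M - m) * (x - x') := by
  set D : ℝ → ℝ := fun y => f (x + y) - f (x' + y)
  set I := Ioc (a - x) (b - x')
  have hD0 : ∀ y, 0 ≤ D y := fun y => sub_nonneg.2 (hf (by linarith))
  have hbdd : ∀ z, |f z| ≤ max |m| |M| := fun z =>
    abs_le_max_abs_abs (hf.mem_Icc_of_eq_of_eq hfa hfb z).1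
      (hf.mem_Icc_of_eq_of_eq hfa hfb z).2
  have hint := fun x => hk.bdd_comp_add_mul hf.measurable hbdd x
  have hDint : Integrable (I.indicator D) := by
    rw [integrable_indicator_iff measurableSet_Ioc,
      ← intervalIntegrable_iff_integrableOn_Ioc_of_le (by linarith)]
    have hshift : ∀ c : ℝ, Monotone fun y => f (c + y) := fun c _ _ h => hf (by linarith)
    exact (hshift x).intervalIntegrable.sub (hshift x').intervalIntegrable
  have hsub : (∫ y in S, f (x + y) * k y) - ∫ y in S, f (x' + y) * k y =
      ∫ y in S, D y * k y := by
    rw [← integral_sub (hint x) (hint x')]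
    simp only [D, sub_mul]
  rw [hsub]
  constructor
  · exact setIntegral_nonneg hS fun y hy => mul_nonneg (hD0 y) (hk0 y hy)
  calc ∫ y in S, D y * k y ≤ ∫ y in S, K * I.indicator D y := by
        refine setIntegral_mono_on ((hint x).sub (hint x') |>.congr_fun (fun y _ => by
          simp only [Pi.sub_apply, D, sub_mul]) hS) (hDint.integrableOn.const_mul K) hS
          fun y hy => ?_
        by_cases hyI : y ∈ I
        · rw [indicator_of_mem hyI]
          exact mul_le_mul_of_nonneg_left (hkK y hy) (hD0 y) |>.trans_eq (mul_comm _ _)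
        · rw [show D y = 0 from sub_comp_add_eq_zero_of_notMem_Ioc hfa hfb hx hyI,
            indicator_of_notMem hyI, zero_mul, mul_zero]
    _ ≤ ∫ y, K * I.indicator D y :=
        setIntegral_le_integral (hDint.const_mul K)
          (ae_of_all _ fun y => mul_nonneg hK (indicator_nonneg (fun y _ => hD0 y) y))
    _ = K * ∫ y in (a - x)..(b - x'), D y := by
        rw [integral_const_mul, integral_indicator measurableSet_Ioc,
          intervalIntegral.integral_of_le (by linarith)]
    _ ≤ K * ((x - x') * (f (x + (b - x')) - f (x' + (a - x)))) :=
        mul_le_mul_of_nonneg_left (hf.intervalIntegral_comp_add_sub_le _ _ hx) hK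
    _ = K * (M - m) * (x - x') := by
        rw [hfb (x + (b - x')) (by linarith), hfa (x' + (a - x)) (by linarith)]; ring

theorem Monotone.lipschitzWith_setIntegral_comp_add_mul (hf : Monotone f) (hab : a ≤ b)
    (hfa : ∀ z ≤ a, f z = m) (hfb : ∀ z, b ≤ z → f z = M) (hS : MeasurableSet S)
    (hk : IntegrableOn k S) (hk0 : ∀ y ∈ S, 0 ≤ k y) (hkK : ∀ y ∈ S, k y ≤ K) (hK : 0 ≤ K) :
    LipschitzWith (K * (M - m)).toNNReal fun x => ∫ y in S, f (x + y) * k y := by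
  have hmM := hf.mem_Icc_of_eq_of_eq hfa hfb a
  have hL : 0 ≤ K * (M - m) := mul_nonneg hK (sub_nonneg.2 (hmM.1.trans hmM.2))
  refine LipschitzWith.of_le_add_mul' _ fun x x' => ?_
  rcases le_total x' x with h | h
  · have := (hf.setIntegral_comp_add_mul_sub_le hab hfa hfb hS hk hk0 hkK hK h).2
    rw [Real.dist_eq, abs_of_nonneg (sub_nonneg.2 h)]
    linarith
  · have := (hf.setIntegral_comp_add_mul_sub_le hab hfa hfb hS hk hk0 hkK hK h).1
    linarith [mul_nonneg hL (dist_nonneg (x := x) (y := x'))]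

end Translation

theorem integrableOn_inv_abs_rpow {e c : ℝ} (he : 1 < e) (hc : 0 < c) :
    IntegrableOn (fun y : ℝ => (|y| ^ e)⁻¹) {y | c ≤ |y|} := by
  have hS : MeasurableSet {y : ℝ | c ≤ |y|} := measurableSet_le measurable_const measurable_abs
  refine Integrable.mono' (((integrable_one_add_norm (E := ℝ) (μ := volume) (r := e)
    (by simpa using he)).const_mul ((1 + c⁻¹) ^ e)).integrableOn)
    (measurable_abs.pow_const e).inv.aestronglyMeasurable
    ((ae_restrict_iff' hS).2 (ae_of_all _ fun y (hy : c ≤ |y|) => ?_))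
  have hy0 : 0 < |y| := hc.trans_le hy
  have hbracket : 1 + |y| ≤ (1 + c⁻¹) * |y| := by
    have : 1 ≤ c⁻¹ * |y| := by rw [← div_eq_inv_mul, le_div_iff₀ hc]; linarith
    linarith
  have hpow : (1 + |y|) ^ e ≤ (1 + c⁻¹) ^ e * |y| ^ e := by
    rw [← Real.mul_rpow (by positivity) hy0.le]
    gcongr
  rw [norm_inv, Real.norm_eq_abs, abs_of_pos (Real.rpow_pos_of_pos hy0 e), Real.norm_eq_abs,
    Real.rpow_neg (by positivity), ← div_eq_mul_inv, le_div_iff₀ (by positivity),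
    ← div_eq_inv_mul, div_le_iff₀ (by positivity)]
  exact hpow

theorem setIntegral_comp_add_sub_div {f g : ℝ → ℝ} {S : Set ℝ} {M : ℝ}
    (hg : IntegrableOn (fun y => (g y)⁻¹) S) (hf : Measurable f) (hfM : ∀ z, |f z| ≤ M)
    (x : ℝ) :
    ∫ y in S, (f (x + y) - f x) / g y =
      (∫ y in S, f (x + y) * (g y)⁻¹) - f x * ∫ y in S, (g y)⁻¹ := by
  simp only [div_eq_mul_inv, sub_mul]
  rw [integral_sub (hg.bdd_comp_add_mul hf hfM x) (hg.const_mul _), integral_const_mul]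

theorem lipschitzOnWith_rpow_Icc {p c : ℝ} (hp : 1 ≤ p) (hc : 0 ≤ c) :
    LipschitzOnWith (p * c ^ (p - 1)).toNNReal (fun t : ℝ => t ^ p) (Icc 0 c) := by
  refine (convex_Icc 0 c).lipschitzOnWith_of_nnnorm_hasDerivWithin_le
    (fun t _ => (Real.hasDerivAt_rpow_const (Or.inr hp)).hasDerivWithinAt) fun t ht => ?_
  rw [← NNReal.coe_le_coe, coe_nnnorm, Real.coe_toNNReal _ (by positivity),
    Real.norm_of_nonneg (by have := ht.1; positivity)]
  exact mul_le_mul_of_nonneg_left (Real.rpow_le_rpow ht.1 ht.2 (by linarith)) (by linarith)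

theorem LipschitzOnWith.congr {α β : Type*} [PseudoEMetricSpace α] [PseudoEMetricSpace β]
    {K : NNReal} {f g : α → β} {s : Set α} (hf : LipschitzOnWith K f s) (h : EqOn g f s) :
    LipschitzOnWith K g s := fun x hx y hy => by
  rw [h hx, h hy]
  exact hf hx hy

theorem stmt7 (s r : ℝ) (hs0 : 0 < s) (hr0 : 0 < r) (hr1 : r < 1)
    (u : ℝ → ℝ)
    (hu1 : ∀ x : ℝ, x < -1 → u x = -1)
    (hu2 : ∀ x : ℝ, -1 ≤ x → x < 0 → u x = -(|x| ^ r))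
    (hu3 : ∀ x : ℝ, 0 ≤ x → x ≤ 1 → u x = x ^ r)
    (hu4 : ∀ x : ℝ, 1 < x → u x = 1)
    (H : ℝ → ℝ)
    (hH : ∀ x : ℝ, 0 ≤ x →
      H x = ∫ y in {y : ℝ | 1 / 2 ≤ |y|}, (u (x + y) - u x) / |y| ^ (1 + 2 * s)) :
    ∃ K : NNReal, LipschitzOnWith K (fun t : ℝ => H (t ^ (1 / r)))
      (Set.Icc 0 ((2 : ℝ) ^ (-r))) := by
  set e := 1 + 2 * s
  have hk := integrableOn_inv_abs_rpow (by linarith : 1 < e) one_half_pos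
  have hneg : ∀ x ≤ 0, u x = -min (|x| ^ r) 1 := fun _ => eq_neg_min_rpow_of_nonpos hr0 hu1 hu2 hu3
  have hpos : ∀ x, 0 ≤ x → u x = min (x ^ r) 1 := fun _ => eq_min_rpow_of_nonneg hr0.le hu3 hu4
  have hu : Monotone u := monotone_of_eq_min_rpow hr0.le hneg hpos
  have hu_neg_one : ∀ x ≤ -1, u x = -1 := fun _ => eq_neg_one_of_le_neg_one hr0.le hneg
  have hu_one : ∀ x, 1 ≤ x → u x = 1 := fun _ => eq_one_of_one_le hr0.le hpos
  have hbdd : ∀ z, |u z| ≤ 1 := fun z => abs_le.2 (hu.mem_Icc_of_eq_of_eq hu_neg_one hu_one z)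
  have hG := hu.lipschitzWith_setIntegral_comp_add_mul (by norm_num) hu_neg_one hu_one
    (measurableSet_le measurable_const measurable_abs) hk (fun y _ => by positivity)
    (fun y (hy : 1 / 2 ≤ |y|) =>
      inv_anti₀ (by positivity) (Real.rpow_le_rpow one_half_pos.le hy (by linarith)))
    (by positivity)
  set C : ℝ := ∫ y in {y : ℝ | 1 / 2 ≤ |y|}, (|y| ^ e)⁻¹
  have hHG : ∀ t ∈ Icc (0 : ℝ) (2 ^ (-r)), H (t ^ (1 / r)) =
      (∫ y in {y : ℝ | 1 / 2 ≤ |y|}, u (t ^ (1 / r) + y) * (|y| ^ e)⁻¹) - C • t := by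
    rintro t ⟨ht0, ht⟩
    have ht1 : t ≤ 1 := ht.trans (Real.rpow_le_one_of_one_le_of_nonpos one_le_two (by linarith))
    rw [hH _ (Real.rpow_nonneg ht0 _), setIntegral_comp_add_sub_div hk hu.measurable hbdd,
      apply_rpow_one_div_eq_self hr0 hu3 ⟨ht0, ht1⟩, smul_eq_mul, mul_comm t]
  have hroot := lipschitzOnWith_rpow_Icc (one_le_one_div hr0 hr1.le)
    (Real.rpow_nonneg zero_le_two (-r))
  have hlip := (hG.comp_lipschitzOnWith hroot).sub (lipschitzWith_smul C).lipschitzOnWith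
  exact ⟨_, hlip.congr hHG⟩
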